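/- If ξ and V are real numbers with 0 < V ≤ ξ, then the initial segment of the exponential series satisfies Σ_{0 ≤ d ≤ V, d ∈ ℕ} ξ^d / d! ≤ (e·ξ/V)^V. -/

import Mathlib

/-!
Rankin's trick: for `d ≤ V` and `ξ / V ≥ 1` we have `ξ ^ d ≤ (ξ / V) ^ V * V ^ d`, so the truncated
series is dominated termwise by `(ξ / V) ^ V` times the full exponential series at `V`, whose sum
is `exp V`; and `(ξ / V) ^ V * exp V = (e ξ / V) ^ V`.
-/

open Nat

lemma pow_le_rpow_mul_pow {r x V : ℝ} (hr : 1 ≤ r) (hx : 0 ≤ x) {d : ℕ} (hd : (d : ℝ) ≤ V) :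
    (r * x) ^ d ≤ r ^ V * x ^ d := by
  rw [mul_pow]
  gcongr
  simpa only [Real.rpow_natCast] using Real.rpow_le_rpow_of_exponent_le hr hd

lemma Real.tsum_pow_div_factorial (x : ℝ) : ∑' n : ℕ, x ^ n / n ! = Real.exp x := by
  rw [Real.exp_eq_exp_ℝ, NormedSpace.exp_eq_tsum_div]

lemma ite_pow_div_factorial_le {ξ V : ℝ} (hV : 0 < V) (hVξ : V ≤ ξ) (d : ℕ) :
    (if (d : ℝ) ≤ V then ξ ^ d / d ! else 0) ≤ (ξ / V) ^ V * (V ^ d / d !) := by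
  split_ifs with hd
  · rw [← mul_div_assoc]
    gcongr
    calc ξ ^ d = (ξ / V * V) ^ d := by rw [div_mul_cancel₀ _ hV.ne']
      _ ≤ (ξ / V) ^ V * V ^ d := pow_le_rpow_mul_pow ((one_le_div hV).2 hVξ) hV.le hd
  · have : 0 ≤ ξ / V := div_nonneg (hV.trans_le hVξ).le hV.le
    positivity

theorem exp_series_initial_bound (ξ V : ℝ) (hV : 0 < V) (hVξ : V ≤ ξ) :
    ∑' d : ℕ, (if (d : ℝ) ≤ V then ξ ^ d / (Nat.factorial d) else 0)
      ≤ (Real.exp 1 * ξ / V) ^ V := by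
  have hξ : 0 < ξ := hV.trans_le hVξ
  have hdom : Summable fun d : ℕ ↦ (ξ / V) ^ V * (V ^ d / d !) :=
    (Real.summable_pow_div_factorial V).mul_left _
  have hnonneg (d : ℕ) : 0 ≤ if (d : ℝ) ≤ V then ξ ^ d / d ! else 0 := by
    split_ifs <;> positivity
  calc ∑' d : ℕ, (if (d : ℝ) ≤ V then ξ ^ d / d ! else 0)
      ≤ ∑' d : ℕ, (ξ / V) ^ V * (V ^ d / d !) :=
        (hdom.of_nonneg_of_le hnonneg (ite_pow_div_factorial_le hV hVξ)).tsum_le_tsum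
          (ite_pow_div_factorial_le hV hVξ) hdom
    _ = (ξ / V) ^ V * Real.exp V := by rw [tsum_mul_left, Real.tsum_pow_div_factorial]
    _ = (Real.exp 1 * ξ / V) ^ V := by
        rw [mul_div_assoc, Real.mul_rpow (Real.exp_pos 1).le (by positivity), Real.exp_one_rpow,
          mul_comm]
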